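/- Let 𝕊 be a K×K {0,1}-matrix each of whose rows contains at least one entry 1, and S_1, …, S_K ∈ ℝ^{d×d}, with Kozyakin 𝕊-lift S^{(1)}, …, S^{(K)} ∈ ℝ^{Kd×Kd}. If a word (i_0, …, i_{n-1}) ∈ {1,…,K}^n with n ≥ 1 is not 𝕊-periodically extendable (i.e. either s_{i_k i_{k+1}} = 0 for some 0 ≤ k ≤ n−2, or s_{i_{n-1} i_0} = 0), then ρ(S^{(i_0)} ⋯ S^{(i_{n-1})}) = 0. -/

import Mathlib

open MeasureTheory Filter Matrix
open scoped Kronecker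

/-- The ℓ²-operator norm of a real square matrix. -/
noncomputable def l2OpNorm {ι : Type*} [Fintype ι] [DecidableEq ι]
    (A : Matrix ι ι ℝ) : ℝ :=
  ‖Matrix.toEuclideanCLM (𝕜 := ℝ) A‖

/-- The spectral radius of a real square matrix: the maximum of the absolute values
of its (complex) eigenvalues. -/
noncomputable def specRad {ι : Type*} [Fintype ι] [DecidableEq ι]
    (A : Matrix ι ι ℝ) : ℝ :=
  (spectralRadius ℂ (A.map (fun x => (x : ℂ)))).toReal

/-- The ordered product `S_{w 0} * S_{w 1} * ⋯ * S_{w (n-1)}`. -/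
noncomputable def wordProd {K : ℕ} {ι : Type*} [Fintype ι] [DecidableEq ι]
    (S : Fin K → Matrix ι ι ℝ) (n : ℕ) (w : ℕ → Fin K) : Matrix ι ι ℝ :=
  (List.ofFn fun k : Fin n => S (w k)).prod

/-- The word `(w 0, …, w (n-1))` is `𝕊`-admissible. -/
def Admissible {K : ℕ} (𝕊 : Matrix (Fin K) (Fin K) ℝ) (n : ℕ) (w : ℕ → Fin K) : Prop :=
  ∀ k, k + 1 < n → 𝕊 (w k) (w (k + 1)) = 1

/-- The word `(w 0, …, w (n-1))` is `𝕊`-periodically extendable. -/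
def PerExt {K : ℕ} (𝕊 : Matrix (Fin K) (Fin K) ℝ) (n : ℕ) (w : ℕ → Fin K) : Prop :=
  Admissible 𝕊 n w ∧ 𝕊 (w (n - 1)) (w 0) = 1

/-- The Kozyakin `𝕊`-lift `S^{(k)} = (δ_kᵀ 𝕊_k) ⊗ S_k`. -/
noncomputable def kozLift {K d : ℕ} (𝕊 : Matrix (Fin K) (Fin K) ℝ)
    (S : Fin K → Matrix (Fin d) (Fin d) ℝ) (k : Fin K) :
    Matrix (Fin K × Fin d) (Fin K × Fin d) ℝ :=
  (Matrix.vecMulVec (Pi.single k 1) (𝕊 k)) ⊗ₖ S k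

/-!
Writing `𝕊^{(k)} = δ_kᵀ 𝕊_k`, the mixed-product rule turns the lifted word product into
`(𝕊^{(i_0)} ⋯ 𝕊^{(i_{n-1})}) ⊗ (S_{i_0} ⋯ S_{i_{n-1}})`. The first factor is a product of rank-one
matrices, hence equals `c · δ_{i_0}ᵀ 𝕊_{i_{n-1}}` with `c = ∏ s_{i_k i_{k+1}}`, and its square
carries the extra factor `s_{i_{n-1} i_0}`. For a word that is not periodically extendable one of
these 0/1 entries vanishes, so the lifted product squares to zero and has spectral radius zero.
-/

theorem spectralRadius_eq_zero_of_isNilpotent {𝕜 A : Type*} [NormedField 𝕜] [Ring A]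
    [Algebra 𝕜 A] {a : A} (ha : IsNilpotent a) : spectralRadius 𝕜 a = 0 := by
  obtain ⟨n, hn⟩ := ha
  rcases eq_or_ne n 0 with rfl | hn0
  · have : Subsingleton A := subsingleton_of_zero_eq_one (by simpa using hn.symm)
    exact spectrum.SpectralRadius.of_subsingleton a
  · have := spectrum.spectralRadius_pow_le (𝕜 := 𝕜) a n hn0
    rw [hn, spectrum.spectralRadius_zero, nonpos_iff_eq_zero] at this
    exact pow_eq_zero_iff hn0 |>.mp this

theorem specRad_eq_zero_of_isNilpotent {ι : Type*} [Fintype ι] [DecidableEq ι]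
    {A : Matrix ι ι ℝ} (hA : IsNilpotent A) : specRad A = 0 := by
  have hAℂ : IsNilpotent (A.map ((↑) : ℝ → ℂ)) := hA.map (algebraMap ℝ ℂ).mapMatrix
  rw [specRad, spectralRadius_eq_zero_of_isNilpotent hAℂ, ENNReal.toReal_zero]

section wordProd

variable {K : ℕ} {ι κ : Type*} [Fintype ι] [DecidableEq ι] [Fintype κ] [DecidableEq κ]

theorem wordProd_succ (S : Fin K → Matrix ι ι ℝ) (n : ℕ) (w : ℕ → Fin K) :
    wordProd S (n + 1) w = S (w 0) * wordProd S n (fun k => w (k + 1)) := by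
  simp [wordProd, List.ofFn_succ]

theorem wordProd_kronecker (A : Fin K → Matrix ι ι ℝ) (B : Fin K → Matrix κ κ ℝ)
    (n : ℕ) (w : ℕ → Fin K) :
    wordProd (fun k => A k ⊗ₖ B k) n w = wordProd A n w ⊗ₖ wordProd B n w := by
  induction n generalizing w with
  | zero => simp [wordProd]
  | succ n ih => rw [wordProd_succ, wordProd_succ, wordProd_succ, ih, mul_kronecker_mul]

theorem wordProd_vecMulVec (u v : Fin K → ι → ℝ) (m : ℕ) (w : ℕ → Fin K) :
    wordProd (fun k => vecMulVec (u k) (v k)) (m + 1) w =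
      (∏ k ∈ Finset.range m, v (w k) ⬝ᵥ u (w (k + 1))) • vecMulVec (u (w 0)) (v (w m)) := by
  induction m generalizing w with
  | zero => simp [wordProd]
  | succ m ih =>
    rw [wordProd_succ, ih, Matrix.mul_smul, vecMulVec_mul_vecMulVec, vecMulVec_smul, smul_smul,
      Finset.prod_range_succ' _ m]

end wordProd

theorem prod_mul_eq_zero_of_not_perExt {K : ℕ} {𝕊 : Matrix (Fin K) (Fin K) ℝ}
    (h01 : ∀ i j, 𝕊 i j = 0 ∨ 𝕊 i j = 1) {m : ℕ} {w : ℕ → Fin K}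
    (hw : ¬ PerExt 𝕊 (m + 1) w) :
    (∏ k ∈ Finset.range m, 𝕊 (w k) (w (k + 1))) * 𝕊 (w m) (w 0) = 0 := by
  by_contra! hne
  rw [mul_ne_zero_iff, Finset.prod_ne_zero_iff] at hne
  refine hw ⟨fun k hk => (h01 _ _).resolve_left (hne.1 k ?_), ?_⟩
  · exact Finset.mem_range.mpr (by omega)
  · simpa using (h01 _ _).resolve_left hne.2

theorem wordProd_vecMulVec_single_mul_self_eq_zero {K : ℕ} {𝕊 : Matrix (Fin K) (Fin K) ℝ}
    (h01 : ∀ i j, 𝕊 i j = 0 ∨ 𝕊 i j = 1) {n : ℕ} (hn : 1 ≤ n) {w : ℕ → Fin K}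
    (hw : ¬ PerExt 𝕊 n w) :
    wordProd (fun k => vecMulVec (Pi.single k 1) (𝕊 k)) n w *
      wordProd (fun k => vecMulVec (Pi.single k 1) (𝕊 k)) n w = 0 := by
  obtain ⟨m, rfl⟩ : ∃ m, n = m + 1 := ⟨n - 1, by omega⟩
  simp only [wordProd_vecMulVec (fun k => Pi.single k 1) 𝕊, dotProduct_single_one]
  rw [smul_mul_smul_comm, vecMulVec_mul_vecMulVec, dotProduct_single_one, vecMulVec_smul,
    smul_smul, mul_assoc, prod_mul_eq_zero_of_not_perExt h01 hw, mul_zero, zero_smul]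

theorem stmt12_general {K d : ℕ}
    (S : Fin K → Matrix (Fin d) (Fin d) ℝ)
    (𝕊 : Matrix (Fin K) (Fin K) ℝ) (h01 : ∀ i j, 𝕊 i j = 0 ∨ 𝕊 i j = 1)
    (n : ℕ) (hn : 1 ≤ n) (w : ℕ → Fin K)
    (hnotper : ¬ PerExt 𝕊 n w) :
    specRad (wordProd (kozLift 𝕊 S) n w) = 0 := by
  refine specRad_eq_zero_of_isNilpotent ⟨2, ?_⟩
  unfold kozLift
  rw [wordProd_kronecker, sq, ← mul_kronecker_mul,
    wordProd_vecMulVec_single_mul_self_eq_zero h01 hn hnotper, zero_kronecker]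

theorem stmt12 {K d : ℕ} (hK : 2 ≤ K) (hd : 1 ≤ d)
    (S : Fin K → Matrix (Fin d) (Fin d) ℝ)
    (𝕊 : Matrix (Fin K) (Fin K) ℝ) (h01 : ∀ i j, 𝕊 i j = 0 ∨ 𝕊 i j = 1)
    (hrow : ∀ i, ∃ j, 𝕊 i j = 1)
    (n : ℕ) (hn : 1 ≤ n) (w : ℕ → Fin K)
    (hnotper : ¬ PerExt 𝕊 n w) :
    specRad (wordProd (kozLift 𝕊 S) n w) = 0 :=
  stmt12_general S 𝕊 h01 n hn w hnotper
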